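/- Let Y be a finite set of closed disks (pairwise distinct as pairs (center, radius) with radius ≥ 0) that is shattered by the family H_≥ = {𝒟(h_≥) : h a circle}. Then the image φ(Y) ⊆ ℝ⁷ under the map φ((x, y), r) = (x, y, x·y, x², y², r, r²) has the same cardinality as Y and is shattered by the family H_∪ = {H₁ ∪ H₂ : H₁, H₂ closed halfspaces of ℝ⁷ of the form {z : ⟨w, z⟩ ≥ b}}. Consequently, the VC dimension of the range space (𝒟, H_≥) is at most the VC dimension of (ℝ⁷, H_∪). -/

import Mathlib

open scoped RealInnerProductSpace

noncomputable section

/-- The ground set `𝒟` of closed disks in the plane: pairs `(center, radius)`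
with radius `≥ 0`. -/
def Ddisks : Set (EuclideanSpace ℝ (Fin 2) × ℝ) := {d | 0 ≤ d.2}

/-- `𝒟(h_≥)` for the circle `h = (q, s)`: the disks lying outside `h` or
intersecting the boundary of `h`. -/
def Dge (q : EuclideanSpace ℝ (Fin 2)) (s : ℝ) : Set (EuclideanSpace ℝ (Fin 2) × ℝ) :=
  {d | d ∈ Ddisks ∧ s ≤ dist d.1 q + d.2}

/-- The family `H_≥ = {𝒟(h_≥) : h a circle}`. -/
def Hge : Set (Set (EuclideanSpace ℝ (Fin 2) × ℝ)) :=
  {f | ∃ q s, 0 < s ∧ f = Dge q s}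

/-- A family `F` of subsets of a ground set shatters `Y` if every subset of `Y` is
cut out by some member of `F`. -/
def Shatters {X : Type*} (F : Set (Set X)) (Y : Set X) : Prop :=
  ∀ S ⊆ Y, ∃ f ∈ F, f ∩ Y = S

/-- The monomial lifting map `φ : ℝ² × ℝ → ℝ⁷`. -/
def phiLift (d : EuclideanSpace ℝ (Fin 2) × ℝ) : EuclideanSpace ℝ (Fin 7) :=
  (WithLp.equiv 2 (Fin 7 → ℝ)).symm
    ![d.1 0, d.1 1, d.1 0 * d.1 1, (d.1 0) ^ 2, (d.1 1) ^ 2, d.2, d.2 ^ 2]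

/-- The family `H_∪` of unions of two closed (upper) halfspaces of `ℝ⁷`. -/
def HUnion7 : Set (Set (EuclideanSpace ℝ (Fin 7))) :=
  {f | ∃ (w₁ w₂ : EuclideanSpace ℝ (Fin 7)) (b₁ b₂ : ℝ),
    f = {z | b₁ ≤ ⟪w₁, z⟫} ∪ {z | b₂ ≤ ⟪w₂, z⟫}}

/-! A disk `(p, r)` meets the outside of the circle `(q, s)` iff either
`s ≤ r`, or `s > r` and `(s - r)² ≤ |p - q|²`. Expanding, each alternative is a linear
inequality in the monomials `x, y, x², y², r, r²` of the disk, i.e. a halfspace condition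
on `φ(p, r)`. So every trace of `H_≥` on `Y` is the pull-back of a trace of `H_∪` on
`φ(Y)`, and `φ` is injective. -/

theorem Shatters.image {X Z : Type*} {F : Set (Set X)} {G : Set (Set Z)} {Y : Set X}
    {g : X → Z} (hF : Shatters F Y) (hFG : ∀ f ∈ F, ∃ f' ∈ G, ∀ y ∈ Y, g y ∈ f' ↔ y ∈ f) :
    Shatters G (g '' Y) := by
  intro S hS
  obtain ⟨f, hfF, hfY⟩ := hF (Y ∩ g ⁻¹' S) Set.inter_subset_left
  obtain ⟨f', hf'G, hf'⟩ := hFG f hfF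
  refine ⟨f', hf'G, Set.Subset.antisymm ?_ fun z hz => ?_⟩
  · rintro _ ⟨hf'y, y, hy, rfl⟩
    have : y ∈ f ∩ Y := ⟨(hf' y hy).1 hf'y, hy⟩
    exact (hfY ▸ this).2
  · obtain ⟨y, hy, rfl⟩ := hS hz
    have : y ∈ f ∩ Y := hfY ▸ ⟨hy, hz⟩
    exact ⟨(hf' y hy).2 this.1, y, hy, rfl⟩

lemma phiLift_injective : Function.Injective phiLift := by
  intro d d' h
  have hcoord (i : Fin 7) : phiLift d i = phiLift d' i := by rw [h]
  have h0 := hcoord 0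
  have h1 := hcoord 1
  have h5 := hcoord 5
  simp only [phiLift, WithLp.equiv_symm_apply, Matrix.cons_val] at h0 h1 h5
  refine Prod.ext ?_ h5
  ext i
  fin_cases i <;> assumption

lemma le_add_iff_le_or_sq_le {s a r : ℝ} (ha : 0 ≤ a) :
    s ≤ a + r ↔ s ≤ r ∨ (s - r) ^ 2 ≤ a ^ 2 := by
  rcases le_or_gt s r with hsr | hsr
  · exact iff_of_true (by linarith) (Or.inl hsr)
  · rw [pow_le_pow_iff_left₀ (by linarith) ha two_ne_zero]
    constructor
    · intro h; exact Or.inr (by linarith)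
    · rintro (h | h) <;> linarith

lemma inner_single_five_phiLift (d : EuclideanSpace ℝ (Fin 2) × ℝ) :
    ⟪EuclideanSpace.single 5 1, phiLift d⟫ = d.2 := by
  simp [EuclideanSpace.inner_single_left, phiLift]

/-- Normal vector of the lifted halfspace `(s - r)² ≤ |p - q|²`. -/
def circleNormal (q : EuclideanSpace ℝ (Fin 2)) (s : ℝ) : EuclideanSpace ℝ (Fin 7) :=
  (WithLp.equiv 2 (Fin 7 → ℝ)).symm ![-2 * q 0, -2 * q 1, 0, 1, 1, 2 * s, -1]

lemma inner_circleNormal_phiLift (q : EuclideanSpace ℝ (Fin 2)) (s : ℝ)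
    (d : EuclideanSpace ℝ (Fin 2) × ℝ) :
    ⟪circleNormal q s, phiLift d⟫ = dist d.1 q ^ 2 - (s - d.2) ^ 2 + (s ^ 2 - ‖q‖ ^ 2) := by
  rw [EuclideanSpace.dist_eq, Real.sq_sqrt (by positivity), EuclideanSpace.norm_eq,
    Real.sq_sqrt (by positivity)]
  simp [PiLp.inner_apply, Fin.sum_univ_seven, Fin.sum_univ_two, circleNormal, phiLift,
    Real.dist_eq, sq_abs]
  ring

lemma mem_Dge_iff_phiLift_mem {q : EuclideanSpace ℝ (Fin 2)} {s : ℝ}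
    {d : EuclideanSpace ℝ (Fin 2) × ℝ} (hd : d ∈ Ddisks) :
    d ∈ Dge q s ↔ phiLift d ∈ {z | s ≤ ⟪EuclideanSpace.single 5 1, z⟫} ∪
      {z | s ^ 2 - ‖q‖ ^ 2 ≤ ⟪circleNormal q s, z⟫} := by
  simp only [Dge, hd, true_and, Set.mem_ofPred_eq, Set.mem_union, inner_single_five_phiLift,
    inner_circleNormal_phiLift, le_add_iff_nonneg_left, sub_nonneg]
  exact le_add_iff_le_or_sq_le dist_nonneg

theorem Shatters.image_phiLift {Y : Set (EuclideanSpace ℝ (Fin 2) × ℝ)} (hYD : Y ⊆ Ddisks)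
    (hY : Shatters Hge Y) : Shatters HUnion7 (phiLift '' Y) := by
  refine hY.image ?_
  rintro _ ⟨q, s, -, rfl⟩
  exact ⟨_, ⟨EuclideanSpace.single 5 1, circleNormal q s, s, s ^ 2 - ‖q‖ ^ 2, rfl⟩,
    fun d hd => (mem_Dge_iff_phiLift_mem (hYD hd)).symm⟩

theorem shattered_lift_to_halfspace_unions_general
    (Y : Set (EuclideanSpace ℝ (Fin 2) × ℝ)) (hYD : Y ⊆ Ddisks)
    (hshat : Shatters Hge Y) :
    ((phiLift '' Y).ncard = Y.ncard ∧ Shatters HUnion7 (phiLift '' Y)) ∧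
    (∀ n : ℕ, (∃ Y' ⊆ Ddisks, Y'.Finite ∧ Y'.ncard = n ∧ Shatters Hge Y') →
      ∃ Z : Set (EuclideanSpace ℝ (Fin 7)), Z.Finite ∧ Z.ncard = n ∧ Shatters HUnion7 Z) := by
  refine ⟨⟨Set.ncard_image_of_injective Y phiLift_injective, hshat.image_phiLift hYD⟩, ?_⟩
  rintro n ⟨Y', hY'D, hY'fin, rfl, hY'⟩
  exact ⟨phiLift '' Y', hY'fin.image _, Set.ncard_image_of_injective Y' phiLift_injective,
    hY'.image_phiLift hY'D⟩

/-- If a finite set `Y` of closed disks is shattered by `H_≥`, then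
its image `φ(Y) ⊆ ℝ⁷` has the same cardinality as `Y` and is shattered by the family
of unions of two closed halfspaces of `ℝ⁷`. Consequently, the VC dimension of
`(𝒟, H_≥)` is at most the VC dimension of `(ℝ⁷, H_∪)`. -/
theorem shattered_lift_to_halfspace_unions
    (Y : Set (EuclideanSpace ℝ (Fin 2) × ℝ)) (hYD : Y ⊆ Ddisks) (hYfin : Y.Finite)
    (hshat : Shatters Hge Y) :
    ((phiLift '' Y).ncard = Y.ncard ∧ Shatters HUnion7 (phiLift '' Y)) ∧
    (∀ n : ℕ, (∃ Y' ⊆ Ddisks, Y'.Finite ∧ Y'.ncard = n ∧ Shatters Hge Y') →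
      ∃ Z : Set (EuclideanSpace ℝ (Fin 7)), Z.Finite ∧ Z.ncard = n ∧ Shatters HUnion7 Z) :=
  shattered_lift_to_halfspace_unions_general Y hYD hshat
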